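/- arXiv:1703.05403 — 4 statements merged into one kernel-verified Lean document; each statement's English description precedes it below -/
import Mathlib

section
/- Let A, B : ℝ^m → O(m) be maps such that A(x) = I whenever ‖x‖ ≥ 1 and B(y) = I whenever ‖y‖ ≥ 1. Then the Milnor–Munkres commutator μ = Ψ_B⁻¹ ∘ Φ_A⁻¹ ∘ Ψ_B ∘ Φ_A is compactly supported: μ(x,y) = (x,y) for every point (x,y) with ‖x‖ > 1 or ‖y‖ > 1. -/
open Matrix

/-- `Φ_A (x, y) = (x, A(x) y)` for a map `A : ℝ^m → O(m)`. -/
noncomputable def PhiMap (m : ℕ)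
    (A : EuclideanSpace ℝ (Fin m) → Matrix.orthogonalGroup (Fin m) ℝ) :
    (EuclideanSpace ℝ (Fin m) × EuclideanSpace ℝ (Fin m)) →
      (EuclideanSpace ℝ (Fin m) × EuclideanSpace ℝ (Fin m)) :=
  fun p => (p.1, WithLp.toLp 2 ((A p.1 : Matrix (Fin m) (Fin m) ℝ).mulVec p.2))

/-- `Ψ_B (x, y) = (B(y) x, y)` for a map `B : ℝ^m → O(m)`. -/
noncomputable def PsiMap (m : ℕ)
    (B : EuclideanSpace ℝ (Fin m) → Matrix.orthogonalGroup (Fin m) ℝ) :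
    (EuclideanSpace ℝ (Fin m) × EuclideanSpace ℝ (Fin m)) →
      (EuclideanSpace ℝ (Fin m) × EuclideanSpace ℝ (Fin m)) :=
  fun p => (WithLp.toLp 2 ((B p.2 : Matrix (Fin m) (Fin m) ℝ).mulVec p.1), p.2)

/-- The inverse `Φ_A⁻¹ (x, y) = (x, A(x)⁻¹ y)` of `Φ_A`. -/
noncomputable def PhiMapInv (m : ℕ)
    (A : EuclideanSpace ℝ (Fin m) → Matrix.orthogonalGroup (Fin m) ℝ) :
    (EuclideanSpace ℝ (Fin m) × EuclideanSpace ℝ (Fin m)) →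
      (EuclideanSpace ℝ (Fin m) × EuclideanSpace ℝ (Fin m)) :=
  fun p => (p.1, WithLp.toLp 2 (((A p.1)⁻¹ : Matrix (Fin m) (Fin m) ℝ).mulVec p.2))

/-- The inverse `Ψ_B⁻¹ (x, y) = (B(y)⁻¹ x, y)` of `Ψ_B`. -/
noncomputable def PsiMapInv (m : ℕ)
    (B : EuclideanSpace ℝ (Fin m) → Matrix.orthogonalGroup (Fin m) ℝ) :
    (EuclideanSpace ℝ (Fin m) × EuclideanSpace ℝ (Fin m)) →
      (EuclideanSpace ℝ (Fin m) × EuclideanSpace ℝ (Fin m)) :=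
  fun p => (WithLp.toLp 2 (((B p.2)⁻¹ : Matrix (Fin m) (Fin m) ℝ).mulVec p.1), p.2)

/-- The Milnor–Munkres commutator `μ = Ψ_B⁻¹ ∘ Φ_A⁻¹ ∘ Ψ_B ∘ Φ_A`. -/
noncomputable def mmCommutator (m : ℕ)
    (A B : EuclideanSpace ℝ (Fin m) → Matrix.orthogonalGroup (Fin m) ℝ) :
    (EuclideanSpace ℝ (Fin m) × EuclideanSpace ℝ (Fin m)) →
      (EuclideanSpace ℝ (Fin m) × EuclideanSpace ℝ (Fin m)) :=
  PsiMapInv m B ∘ PhiMapInv m A ∘ PsiMap m B ∘ PhiMap m A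

/-! Orthogonal matrices preserve norms, so `Φ_A` does not change `‖y‖` and `Ψ_B` does not change
`‖x‖`. If `‖x‖ > 1`, then `A = I` both at `x` and at the first coordinate of `Ψ_B(x, y)`, so `μ`
reduces to `Ψ_B⁻¹ ∘ Ψ_B`; symmetrically if `‖y‖ > 1`. -/

section OrthogonalGroup

variable {n : Type*} [Fintype n] [DecidableEq n]

lemma Matrix.norm_toLp_orthogonalGroup_mulVec (U : orthogonalGroup n ℝ) (v : EuclideanSpace ℝ n) :
    ‖WithLp.toLp 2 ((U : Matrix n n ℝ) *ᵥ v)‖ = ‖v‖ :=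
  (toEuclideanCLM (𝕜 := ℝ) (U : Matrix n n ℝ)).norm_map_of_mem_unitary
    (Unitary.map_mem _ U.2) v

lemma Matrix.orthogonalGroup_inv_mulVec_mulVec (U : orthogonalGroup n ℝ) (v : n → ℝ) :
    (U : Matrix n n ℝ)⁻¹ *ᵥ ((U : Matrix n n ℝ) *ᵥ v) = v := by
  rw [mulVec_mulVec, nonsing_inv_mul _ (UnitaryGroup.det_isUnit U), one_mulVec]

end OrthogonalGroup

section MilnorMunkres

variable {m : ℕ} (A B : EuclideanSpace ℝ (Fin m) → orthogonalGroup (Fin m) ℝ)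
  (p : EuclideanSpace ℝ (Fin m) × EuclideanSpace ℝ (Fin m))

lemma norm_snd_PhiMap : ‖(PhiMap m A p).2‖ = ‖p.2‖ :=
  norm_toLp_orthogonalGroup_mulVec _ _

lemma norm_fst_PsiMap : ‖(PsiMap m B p).1‖ = ‖p.1‖ :=
  norm_toLp_orthogonalGroup_mulVec _ _

lemma PhiMapInv_PhiMap : PhiMapInv m A (PhiMap m A p) = p := by
  simp only [PhiMap, PhiMapInv, WithLp.ofLp_toLp, orthogonalGroup_inv_mulVec_mulVec]

lemma PsiMapInv_PsiMap : PsiMapInv m B (PsiMap m B p) = p := by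
  simp only [PsiMap, PsiMapInv, WithLp.ofLp_toLp, orthogonalGroup_inv_mulVec_mulVec]

variable {A B p}

lemma PhiMap_eq_self (h : A p.1 = 1) : PhiMap m A p = p := by
  simp [PhiMap, h]

lemma PhiMapInv_eq_self (h : A p.1 = 1) : PhiMapInv m A p = p := by
  simp [PhiMapInv, h]

lemma PsiMap_eq_self (h : B p.2 = 1) : PsiMap m B p = p := by
  simp [PsiMap, h]

lemma PsiMapInv_eq_self (h : B p.2 = 1) : PsiMapInv m B p = p := by
  simp [PsiMapInv, h]

lemma mmCommutator_eq_self_of_le_norm_fst {r : ℝ}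
    (hA : ∀ x : EuclideanSpace ℝ (Fin m), r ≤ ‖x‖ → A x = 1) (hp : r ≤ ‖p.1‖) :
    mmCommutator m A B p = p := by
  have hΨ : A (PsiMap m B p).1 = 1 := hA _ (hp.trans_eq (norm_fst_PsiMap B p).symm)
  simp only [mmCommutator, Function.comp_apply, PhiMap_eq_self (hA _ hp),
    PhiMapInv_eq_self hΨ, PsiMapInv_PsiMap]

lemma mmCommutator_eq_self_of_le_norm_snd {r : ℝ}
    (hB : ∀ y : EuclideanSpace ℝ (Fin m), r ≤ ‖y‖ → B y = 1) (hp : r ≤ ‖p.2‖) :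
    mmCommutator m A B p = p := by
  have hΦ : B (PhiMap m A p).2 = 1 := hB _ (hp.trans_eq (norm_snd_PhiMap A p).symm)
  simp only [mmCommutator, Function.comp_apply, PsiMap_eq_self hΦ, PhiMapInv_PhiMap,
    PsiMapInv_eq_self (hB _ hp)]

end MilnorMunkres

/-- If `A(x) = I` whenever `‖x‖ ≥ 1` and `B(y) = I` whenever `‖y‖ ≥ 1`, then
the Milnor–Munkres commutator `μ = Ψ_B⁻¹ ∘ Φ_A⁻¹ ∘ Ψ_B ∘ Φ_A` is compactly
supported: `μ(x,y) = (x,y)` whenever `‖x‖ > 1` or `‖y‖ > 1`. -/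
theorem statement3 (m : ℕ)
    (A B : EuclideanSpace ℝ (Fin m) → Matrix.orthogonalGroup (Fin m) ℝ)
    (hA : ∀ x : EuclideanSpace ℝ (Fin m), 1 ≤ ‖x‖ → A x = 1)
    (hB : ∀ y : EuclideanSpace ℝ (Fin m), 1 ≤ ‖y‖ → B y = 1)
    (x y : EuclideanSpace ℝ (Fin m)) (hxy : 1 < ‖x‖ ∨ 1 < ‖y‖) :
    mmCommutator m A B (x, y) = (x, y) := by
  rcases hxy with hx | hy
  · exact mmCommutator_eq_self_of_le_norm_fst hA hx.le
  · exact mmCommutator_eq_self_of_le_norm_snd hB hy.le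
end

section
/- Let A, B : ℝ^m → O(m) be maps into the orthogonal group such that A(q) = I and B(q) = I whenever ‖q‖ < 0.1 or ‖q‖ > 0.6. Then the Milnor–Munkres commutator μ = Ψ_B⁻¹ ∘ Φ_A⁻¹ ∘ Ψ_B ∘ Φ_A is supported in the spherical shell {0.1 ≤ ‖(x,y)‖ ≤ 0.9}: μ(x,y) = (x,y) whenever ‖(x,y)‖ < 0.1 or ‖(x,y)‖ > 0.9. -/
open Matrix

/-- The norm of `(x, y) ∈ ℝ^m × ℝ^m` given by `(‖x‖² + ‖y‖²)^{1/2}`, i.e. the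
`ℓ²`-product norm. -/
noncomputable def prodL2Norm (m : ℕ)
    (p : EuclideanSpace ℝ (Fin m) × EuclideanSpace ℝ (Fin m)) : ℝ :=
  ‖(WithLp.equiv 2 (EuclideanSpace ℝ (Fin m) × EuclideanSpace ℝ (Fin m))).symm p‖

/-! `Φ_A` changes only the second coordinate and `Ψ_B` only the first, each by an orthogonal map,
so the norms of the coordinates never change along the four steps of `μ(x, y)`. Hence if `A` is
trivial on the sphere through `x`, both `Φ_A` and `Φ_A⁻¹` act trivially and the two `Ψ_B`-factors
cancel; symmetrically for `B` on the sphere through `y`. Inside the ball of radius `0.1` both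
`‖x‖` and `‖y‖` are below `0.1`, and outside the ball of radius `0.9` one of them exceeds `0.6`,
as `2 · 0.6² < 0.9²`. -/

open WithLp

theorem norm_toLp_unitaryGroup_mulVec {𝕜 n : Type*} [RCLike 𝕜] [Fintype n] [DecidableEq n]
    (U : unitaryGroup n 𝕜) (v : EuclideanSpace 𝕜 n) :
    ‖toLp 2 ((U : Matrix n n 𝕜) *ᵥ v)‖ = ‖v‖ :=
  ContinuousLinearMap.norm_map_of_mem_unitary
    (Unitary.map_mem (toEuclideanCLM (n := n) (𝕜 := 𝕜)) U.2) v

theorem unitaryGroup_coe_inv_mul_self {α n : Type*} [CommRing α] [StarRing α] [Fintype n]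
    [DecidableEq n] (U : unitaryGroup n α) : (U : Matrix n n α)⁻¹ * U = 1 := by
  rw [inv_eq_left_inv (Unitary.coe_star_mul_self U), Unitary.coe_star_mul_self U]

theorem prodL2Norm_sq (m : ℕ) (p : EuclideanSpace ℝ (Fin m) × EuclideanSpace ℝ (Fin m)) :
    prodL2Norm m p ^ 2 = ‖p.1‖ ^ 2 + ‖p.2‖ ^ 2 :=
  WithLp.prod_norm_sq_eq_of_L2 _

section

variable {m : ℕ} {A B : EuclideanSpace ℝ (Fin m) → orthogonalGroup (Fin m) ℝ}
  {x y : EuclideanSpace ℝ (Fin m)}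

theorem mmCommutator_apply_of_eqOn_sphere_fst (hA : Set.EqOn A 1 (Metric.sphere 0 ‖x‖)) :
    mmCommutator m A B (x, y) = (x, y) := by
  have hAx : A x = 1 := hA (mem_sphere_zero_iff_norm.2 rfl)
  have hABx : A (toLp 2 ((B y : Matrix (Fin m) (Fin m) ℝ) *ᵥ x)) = 1 :=
    hA (mem_sphere_zero_iff_norm.2 (norm_toLp_unitaryGroup_mulVec _ _))
  simp [mmCommutator, PhiMap, PsiMap, PhiMapInv, PsiMapInv, hAx, hABx,
    unitaryGroup_coe_inv_mul_self]

theorem mmCommutator_apply_of_eqOn_sphere_snd (hB : Set.EqOn B 1 (Metric.sphere 0 ‖y‖)) :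
    mmCommutator m A B (x, y) = (x, y) := by
  have hBy : B y = 1 := hB (mem_sphere_zero_iff_norm.2 rfl)
  have hBAy : B (toLp 2 ((A x : Matrix (Fin m) (Fin m) ℝ) *ᵥ y)) = 1 :=
    hB (mem_sphere_zero_iff_norm.2 (norm_toLp_unitaryGroup_mulVec _ _))
  simp [mmCommutator, PhiMap, PsiMap, PhiMapInv, PsiMapInv, hBy, hBAy,
    unitaryGroup_coe_inv_mul_self]

end

/-- If `A(q) = I` and `B(q) = I` whenever `‖q‖ < 0.1` or `‖q‖ > 0.6`, then the
Milnor–Munkres commutator `μ = Ψ_B⁻¹ ∘ Φ_A⁻¹ ∘ Ψ_B ∘ Φ_A` is supported in the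
spherical shell `{0.1 ≤ ‖(x,y)‖ ≤ 0.9}`: `μ(x,y) = (x,y)` whenever
`‖(x,y)‖ < 0.1` or `‖(x,y)‖ > 0.9`. -/
theorem statement6 (m : ℕ)
    (A B : EuclideanSpace ℝ (Fin m) → Matrix.orthogonalGroup (Fin m) ℝ)
    (hA : ∀ q : EuclideanSpace ℝ (Fin m), ‖q‖ < 0.1 ∨ 0.6 < ‖q‖ → A q = 1)
    (hB : ∀ q : EuclideanSpace ℝ (Fin m), ‖q‖ < 0.1 ∨ 0.6 < ‖q‖ → B q = 1)
    (p : EuclideanSpace ℝ (Fin m) × EuclideanSpace ℝ (Fin m))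
    (hp : prodL2Norm m p < 0.1 ∨ 0.9 < prodL2Norm m p) :
    mmCommutator m A B p = p := by
  obtain ⟨x, y⟩ := p
  have hsq := prodL2Norm_sq m (x, y)
  have hp0 : 0 ≤ prodL2Norm m (x, y) := norm_nonneg _
  have hx0 := norm_nonneg x
  have hy0 := norm_nonneg y
  rcases hp with hinner | houter
  · refine mmCommutator_apply_of_eqOn_sphere_fst fun q hq => hA q (Or.inl ?_)
    rw [mem_sphere_zero_iff_norm.1 hq]
    nlinarith
  · by_cases hx : 0.6 < ‖x‖
    · refine mmCommutator_apply_of_eqOn_sphere_fst fun q hq => hA q (Or.inr ?_)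
      rwa [mem_sphere_zero_iff_norm.1 hq]
    · refine mmCommutator_apply_of_eqOn_sphere_snd fun q hq => hB q (Or.inr ?_)
      rw [mem_sphere_zero_iff_norm.1 hq]
      nlinarith
end

section
/- Let M be a set, η : ℝ → (M ≃ M) a family of bijections of M, and f : ℝ → M → ℝ a family of real-valued functions. For p ∈ M set F_p(t) = f_t(η_t⁻¹(p)). Assume there is a constant C < 1 such that |F_p(t) − F_p(s)| ≤ C·|t − s| for all p ∈ M and t, s ∈ ℝ, that each F_p is continuous, and that each F_p is bounded. Then the map Φ : M × ℝ → M × ℝ defined by Φ(x,t) = (η_t(x), t − f_t(x)) is a bijection. -/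
/-- Let `M` be a set, `η : ℝ → (M ≃ M)` a family of bijections and
`f : ℝ → M → ℝ` a family of functions. For `p ∈ M` set
`F p t = f t (η t⁻¹ p)`. If there is a constant `C < 1` with
`|F p t − F p s| ≤ C |t − s|` for all `p, t, s`, each `F p` is continuous and
each `F p` is bounded, then `Φ(x,t) = (η t x, t − f t x)` is a bijection of
`M × ℝ`. -/
theorem statement10 {M : Type*} (η : ℝ → M ≃ M) (f : ℝ → M → ℝ) (F : M → ℝ → ℝ)
    (hF : ∀ (p : M) (t : ℝ), F p t = f t ((η t).symm p))
    (C : ℝ) (hC : C < 1)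
    (hLip : ∀ (p : M) (t s : ℝ), |F p t - F p s| ≤ C * |t - s|)
    (hcont : ∀ p : M, Continuous (F p))
    (hbdd : ∀ p : M, ∃ B : ℝ, ∀ t : ℝ, |F p t| ≤ B) :
    Function.Bijective
      (fun q : M × ℝ => ((η q.2 q.1, q.2 - f q.2 q.1) : M × ℝ)) := by
  constructor
  · rintro ⟨x, t⟩ ⟨y, s⟩ h
    simp only [Prod.mk.injEq] at h
    obtain ⟨h1, h2⟩ := h
    set p := η t x with hp
    have hx : f t x = F p t := by
      rw [hF]; congr 1; rw [hp, Equiv.symm_apply_apply]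
    have hy : f s y = F p s := by
      rw [hF]; congr 1; rw [h1, Equiv.symm_apply_apply]
    have hts : t = s := by
      by_contra hne
      have hd : t - s = F p t - F p s := by
        rw [← hx, ← hy]; linarith
      have h3 := hLip p t s
      rw [← hd] at h3
      have h4 : (0:ℝ) < |t - s| := abs_pos.mpr (sub_ne_zero.mpr hne)
      nlinarith
    subst hts
    have hxy : x = y := by
      have := h1
      exact (η t).injective (by rw [hp] at this; exact this.symm ▸ rfl)
    exact Prod.ext hxy rfl
  · rintro ⟨p, u⟩
    obtain ⟨B, hB⟩ := hbdd p
    have hB0 : 0 ≤ B := le_trans (abs_nonneg _) (hB 0)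
    have g := fun t => t - F p t
    have hgc : ContinuousOn (fun t => t - F p t) (Set.Icc (u - B) (u + B)) :=
      (continuous_id.sub (hcont p)).continuousOn
    have h1 : (fun t => t - F p t) (u - B) ≤ u := by
      have := (abs_le.mp (hB (u - B))).1
      simp only
      linarith
    have h2 : u ≤ (fun t => t - F p t) (u + B) := by
      have := (abs_le.mp (hB (u + B))).2
      simp only
      linarith
    have hmem : u ∈ Set.Icc ((fun t => t - F p t) (u - B)) ((fun t => t - F p t) (u + B)) :=
      ⟨h1, h2⟩
    obtain ⟨t, _, ht⟩ := intermediate_value_Icc (by linarith : u - B ≤ u + B) hgc hmem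
    refine ⟨⟨(η t).symm p, t⟩, ?_⟩
    simp only [Prod.mk.injEq]
    constructor
    · exact (η t).apply_symm_apply p
    · rw [← hF]
      exact ht
end

section
/- Let M be a set, η : ℝ → (M ≃ M) a family of bijections of M, and f : ℝ → M → ℝ a family of real-valued functions. For p ∈ M set F_p(t) = f_t(η_t⁻¹(p)). Assume there is a constant C < 1 such that |F_p(t) − F_p(s)| ≤ C·|t − s| for all p ∈ M and t, s ∈ ℝ, that each F_p is continuous, and that each F_p is bounded. Then for every l ∈ [0,1], the linear interpolation Φ_l : M × ℝ → M × ℝ defined by Φ_l(x,t) = (η_t(x), t − l·f_t(x)) is a bijection. -/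
/-!
Composing with the inverse of the bijection `(x, t) ↦ (η t x, t)` of `M × ℝ` turns `Φ_l` into the
fibrewise map `(p, t) ↦ (p, t - l * F p t)`, so it suffices that `t ↦ t - l * F p t` is a bijection
of `ℝ` for each `p`. Solving `t - l * F p t = s` means finding a fixed point of
`t ↦ s + l * F p t`, a contraction with constant `l * C < 1`; Banach's fixed point theorem gives
existence and uniqueness.
-/

open Function
open scoped NNReal

theorem Function.Bijective.prod_of_bijective_fiber {M N T T' : Type*} (η : T → M ≃ N)
    (h : T → M → T') (hfib : ∀ p, Bijective fun t => h t ((η t).symm p)) :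
    Bijective fun q : M × T => (η q.2 q.1, h q.2 q.1) := by
  have hcomp : (fun q : M × T => (η q.2 q.1, h q.2 q.1)) =
      Equiv.prodCongrRight (fun p => Equiv.ofBijective _ (hfib p)) ∘ Equiv.prodCongrLeft η := by
    ext ⟨x, t⟩ <;> simp
  exact hcomp ▸ (Equiv.bijective _).comp (Equiv.bijective _)

theorem LipschitzWith.bijective_id_sub {E : Type*} [NormedAddCommGroup E] [CompleteSpace E]
    {K : ℝ≥0} {φ : E → E} (hK : K < 1) (hφ : LipschitzWith K φ) :
    Bijective fun x => x - φ x := by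
  refine (bijective_iff_existsUnique _).2 fun y => ?_
  have hψ : ContractingWith K (y + φ ·) :=
    ⟨hK, by simpa [comp_def] using (isometry_add_left y).lipschitz.comp hφ⟩
  have hfix : ∀ x, x - φ x = y ↔ IsFixedPt (y + φ ·) x := fun x => by
    rw [sub_eq_iff_eq_add, eq_comm, IsFixedPt]
  exact ⟨_, (hfix _).2 hψ.fixedPoint_isFixedPt, fun x hx => hψ.fixedPoint_unique ((hfix x).1 hx)⟩

theorem statement11_general {M : Type*} (η : ℝ → M ≃ M) (f : ℝ → M → ℝ) (F : M → ℝ → ℝ)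
    (hF : ∀ (p : M) (t : ℝ), F p t = f t ((η t).symm p))
    (C : ℝ) (hC : C < 1)
    (hLip : ∀ (p : M) (t s : ℝ), |F p t - F p s| ≤ C * |t - s|) :
    ∀ l ∈ Set.Icc (0 : ℝ) 1,
      Function.Bijective
        (fun q : M × ℝ => ((η q.2 q.1, q.2 - l * f q.2 q.1) : M × ℝ)) := by
  rintro l ⟨hl0, hl1⟩
  refine Bijective.prod_of_bijective_fiber η (fun t x => t - l * f t x) fun p => ?_
  simp only [← hF]
  have hK : (l * C).toNNReal < 1 := by
    rw [Real.toNNReal_lt_one]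
    rcases le_or_gt C 0 with hC0 | hC0 <;> nlinarith
  refine LipschitzWith.bijective_id_sub hK (LipschitzWith.of_dist_le' fun t s => ?_)
  rw [Real.dist_eq, Real.dist_eq, ← mul_sub, abs_mul, abs_of_nonneg hl0, mul_assoc]
  exact mul_le_mul_of_nonneg_left (hLip p t s) hl0

/-- Let `M` be a set, `η : ℝ → (M ≃ M)` a family of bijections and
`f : ℝ → M → ℝ` a family of functions. For `p ∈ M` set
`F p t = f t (η t⁻¹ p)`. If there is a constant `C < 1` with
`|F p t − F p s| ≤ C |t − s|` for all `p, t, s`, each `F p` is continuous and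
each `F p` is bounded, then for every `l ∈ [0,1]` the linear interpolation
`Φ_l (x,t) = (η t x, t − l · f t x)` is a bijection of `M × ℝ`. -/
theorem statement11 {M : Type*} (η : ℝ → M ≃ M) (f : ℝ → M → ℝ) (F : M → ℝ → ℝ)
    (hF : ∀ (p : M) (t : ℝ), F p t = f t ((η t).symm p))
    (C : ℝ) (hC : C < 1)
    (hLip : ∀ (p : M) (t s : ℝ), |F p t - F p s| ≤ C * |t - s|)
    (hcont : ∀ p : M, Continuous (F p))
    (hbdd : ∀ p : M, ∃ B : ℝ, ∀ t : ℝ, |F p t| ≤ B) :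
    ∀ l ∈ Set.Icc (0 : ℝ) 1,
      Function.Bijective
        (fun q : M × ℝ => ((η q.2 q.1, q.2 - l * f q.2 q.1) : M × ℝ)) :=
  statement11_general η f F hF C hC hLip
end
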